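/- Let K be a field of characteristic different from 2, let D ∈ K[X] have even degree 2d with d ≥ 1 and leading coefficient a square in K, and let δ ∈ K((T)) satisfy δ² = ι D. Let p, q ∈ K[X] with q ≠ 0. Then deg(p² − D·q²) < d if and only if (p, q) is a convergent of δ or (p, −q) is a convergent of δ. In particular, for every non-trivial solution (p, q) of the Pell equation p² − D·q² = 1, one of (p, q), (p, −q) is a convergent of δ. -/

import Mathlib

/-!
Put `A = ι p - δ ι q` and `B = ι p + δ ι q`, so that `A B = ι (p² - D q²)` and
`B - A = 2 δ ι q` has order `-d - deg q`, because `δ` has order `-d` and `2 ≠ 0`.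
If `ord A > deg q`, then (as `d ≥ 1`) `A` is negligible against `B - A`, so
`ord B = -d - deg q` and `ord (A B) > -d`, i.e. `deg (p² - D q²) < d`; symmetrically for `B`.
Conversely one of `A`, `B`, say `A`, has `ord A ≤ ord (B - A) = -d - deg q`, and then
`ord (A B) > -d` forces `ord B > deg q`.
-/

open Polynomial

/-- The ring homomorphism `K[X] → K((T))` sending `X` to `T⁻¹`. -/
noncomputable def iota {K : Type*} [Field K] : Polynomial K →+* LaurentSeries K :=
  Polynomial.eval₂RingHom (HahnSeries.C : K →+* LaurentSeries K)
    (HahnSeries.single (-1 : ℤ) (1 : K))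

/-- `(p, q)` is a convergent of `α`: `q ≠ 0` and `orderTop (ι p - α ι q) > deg q`. -/
def IsConvergent {K : Type*} [Field K] (α : LaurentSeries K) (p q : Polynomial K) : Prop :=
  q ≠ 0 ∧ (q.natDegree : WithTop ℤ) < (iota p - α * iota q).orderTop

namespace HahnSeries

variable {Γ R : Type*} [AddCommGroup Γ] [LinearOrder Γ] [IsOrderedAddMonoid Γ] [Ring R]

theorem lt_orderTop_or_lt_orderTop_iff {x y : HahnSeries Γ R} {g n : Γ}
    (hg : (y - x).orderTop = g) (hgn : g < n) :
    (↑n < x.orderTop ∨ ↑n < y.orderTop) ↔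
      ((n + g : Γ) : WithTop Γ) < x.orderTop + y.orderTop := by
  constructor
  · rintro (hx | hy)
    · have hy : y.orderTop = g := by
        have hlt : (y - x).orderTop < x.orderTop := hg ▸ (WithTop.coe_lt_coe.2 hgn).trans hx
        have := orderTop_add_eq_left hlt
        rwa [sub_add_cancel, hg] at this
      rw [hy, WithTop.coe_add]
      exact WithTop.add_lt_add_right WithTop.coe_ne_top hx
    · have hx : x.orderTop = g := by
        have hlt : (-(y - x)).orderTop < y.orderTop := by
          rw [orderTop_neg, hg]
          exact (WithTop.coe_lt_coe.2 hgn).trans hy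
        have := orderTop_add_eq_left hlt
        rwa [orderTop_neg, hg, neg_sub, sub_add_cancel] at this
      rw [hx, WithTop.coe_add, add_comm (n : WithTop Γ)]
      exact WithTop.add_lt_add_left WithTop.coe_ne_top hy
  · intro h
    by_contra! hle
    rcases min_le_iff.1 (hg ▸ min_orderTop_le_orderTop_sub : min y.orderTop x.orderTop ≤ g)
      with hyg | hxg
    · exact h.not_ge (by simpa [add_comm] using add_le_add hle.1 hyg)
    · exact h.not_ge (by simpa [add_comm] using add_le_add hxg hle.2)

end HahnSeries

section Iota

variable {K : Type*} [Field K]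

theorem iota_monomial (n : ℕ) (c : K) :
    iota (monomial n c) = HahnSeries.single (-(n : ℤ)) c := by
  simp [iota, ← C_mul_X_pow_eq_monomial, HahnSeries.single_pow, HahnSeries.C_apply,
    HahnSeries.single_mul_single]

theorem orderTop_iota {f : K[X]} (hf : f ≠ 0) :
    (iota f).orderTop = (-(f.natDegree : ℤ) : ℤ) := by
  induction h : f.natDegree using Nat.strong_induction_on generalizing f with
  | _ n ih =>
    rw [← f.eraseLead_add_monomial_natDegree_leadingCoeff, map_add, iota_monomial, h]
    have hlead := HahnSeries.orderTop_single (a := -(n : ℤ)) (leadingCoeff_ne_zero.2 hf)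
    rcases eq_or_ne f.eraseLead 0 with h0 | h0
    · rw [h0, map_zero, zero_add, hlead]
    · have hlt : f.eraseLead.natDegree < n :=
        h ▸ f.eraseLead_natDegree_lt_or_eraseLead_eq_zero.resolve_right h0
      have htail : (HahnSeries.single (-(n : ℤ)) f.leadingCoeff).orderTop <
          (iota f.eraseLead).orderTop := by
        rw [hlead, ih _ hlt h0 rfl, WithTop.coe_lt_coe]
        omega
      rw [HahnSeries.orderTop_add_eq_right htail, hlead]

theorem degree_lt_iff_neg_lt_orderTop_iota (f : K[X]) (n : ℕ) :
    f.degree < n ↔ ((-(n : ℤ) : ℤ) : WithTop ℤ) < (iota f).orderTop := by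
  rcases eq_or_ne f 0 with rfl | hf
  · rw [map_zero, HahnSeries.orderTop_zero]
    exact iff_of_true (WithBot.bot_lt_coe _) (WithTop.coe_lt_top _)
  rw [degree_eq_natDegree hf, orderTop_iota hf, WithTop.coe_lt_coe, Nat.cast_lt]
  omega

theorem orderTop_eq_of_sq_eq_iota {δ : LaurentSeries K} {D : K[X]} {d : ℕ}
    (hdeg : D.degree = (2 * d : ℕ)) (hδ : δ ^ 2 = iota D) : δ.orderTop = (-(d : ℤ) : ℤ) := by
  have hD : D ≠ 0 :=
    ne_zero_of_degree_gt (n := ⊥) (by rw [hdeg]; exact WithBot.bot_lt_coe _)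
  have hsq := congrArg HahnSeries.orderTop hδ
  rw [pow_two, HahnSeries.orderTop_mul, orderTop_iota hD,
    natDegree_eq_of_degree_eq_some hdeg] at hsq
  have hδ0 : δ.orderTop ≠ ⊤ := by
    intro h
    rw [h, WithTop.top_add] at hsq
    exact WithTop.top_ne_coe hsq
  obtain ⟨k, hk⟩ := WithTop.ne_top_iff_exists.1 hδ0
  rw [← hk, ← WithTop.coe_add, WithTop.coe_eq_coe] at hsq
  rw [← hk, WithTop.coe_eq_coe]
  omega

theorem degree_sq_sub_mul_sq_lt_iff_isConvergent (h2 : (2 : K) ≠ 0)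
    {D : K[X]} {d : ℕ} (hd : 1 ≤ d) (hdeg : D.degree = (2 * d : ℕ))
    {δ : LaurentSeries K} (hδ : δ ^ 2 = iota D) (p : K[X]) {q : K[X]} (hq : q ≠ 0) :
    (p ^ 2 - D * q ^ 2).degree < (d : ℕ) ↔ IsConvergent δ p q ∨ IsConvergent δ p (-q) := by
  set A := iota p - δ * iota q
  set B := iota p + δ * iota q
  have hAB : A * B = iota (p ^ 2 - D * q ^ 2) := by
    simp only [A, B, map_sub, map_mul, map_pow, ← hδ]
    ring
  have hBA : (B - A).orderTop = ((-(d : ℤ) - q.natDegree : ℤ) : WithTop ℤ) := by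
    have h2C : (2 : LaurentSeries K) = HahnSeries.single 0 2 := by
      rw [← HahnSeries.C_apply, map_ofNat]
    have : B - A = 2 * δ * iota q := by ring
    rw [this, HahnSeries.orderTop_mul, HahnSeries.orderTop_mul, h2C,
      HahnSeries.orderTop_single h2, orderTop_eq_of_sq_eq_iota hdeg hδ, orderTop_iota hq,
      ← WithTop.coe_add, ← WithTop.coe_add, WithTop.coe_eq_coe]
    ring
  have hconv : IsConvergent δ p q ∨ IsConvergent δ p (-q) ↔
      ((q.natDegree : ℤ) : WithTop ℤ) < A.orderTop ∨
        ((q.natDegree : ℤ) : WithTop ℤ) < B.orderTop := by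
    simp only [IsConvergent, hq, ne_eq, neg_eq_zero, not_false_eq_true, true_and, natDegree_neg,
      map_neg, mul_neg, sub_neg_eq_add, WithTop.coe_natCast, A, B]
  rw [hconv, HahnSeries.lt_orderTop_or_lt_orderTop_iff hBA (by omega),
    ← HahnSeries.orderTop_mul, hAB, degree_lt_iff_neg_lt_orderTop_iota, add_sub_cancel]

end Iota

theorem weak_pell_solutions_are_convergents_general {K : Type*} [Field K] (h2 : (2 : K) ≠ 0)
    (D : Polynomial K) (d : ℕ) (hd : 1 ≤ d) (hdeg : D.degree = (2 * d : ℕ))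
    (δ : LaurentSeries K) (hδ : δ ^ 2 = iota D)
    (p q : Polynomial K) (hq : q ≠ 0) :
    ((p ^ 2 - D * q ^ 2).degree < (d : ℕ) ↔
      (IsConvergent δ p q ∨ IsConvergent δ p (-q))) ∧
    (∀ p' q' : Polynomial K, q' ≠ 0 → p' ^ 2 - D * q' ^ 2 = 1 →
      (IsConvergent δ p' q' ∨ IsConvergent δ p' (-q'))) := by
  refine ⟨degree_sq_sub_mul_sq_lt_iff_isConvergent h2 hd hdeg hδ p hq,
    fun p' q' hq' hpell => ?_⟩
  refine (degree_sq_sub_mul_sq_lt_iff_isConvergent h2 hd hdeg hδ p' hq').1 ?_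
  rw [hpell, degree_one]
  exact_mod_cast hd

/-- For `δ² = ι D` with `deg D = 2d`, one has `deg (p² - D q²) < d` iff `(p, q)` or `(p, -q)`
is a convergent of `δ`.  In particular every non-trivial Pell solution is (up to the sign of
`q`) a convergent of `δ`. -/
theorem weak_pell_solutions_are_convergents {K : Type*} [Field K] (h2 : (2 : K) ≠ 0)
    (D : Polynomial K) (d : ℕ) (hd : 1 ≤ d) (hdeg : D.degree = (2 * d : ℕ))
    (hlc : ∃ c : K, D.leadingCoeff = c ^ 2)
    (δ : LaurentSeries K) (hδ : δ ^ 2 = iota D)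
    (p q : Polynomial K) (hq : q ≠ 0) :
    ((p ^ 2 - D * q ^ 2).degree < (d : ℕ) ↔
      (IsConvergent δ p q ∨ IsConvergent δ p (-q))) ∧
    (∀ p' q' : Polynomial K, q' ≠ 0 → p' ^ 2 - D * q' ^ 2 = 1 →
      (IsConvergent δ p' q' ∨ IsConvergent δ p' (-q'))) :=
  weak_pell_solutions_are_convergents_general h2 D d hd hdeg δ hδ p q hq
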